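/- arXiv:0902.1354 — 5 statements merged into one kernel-verified Lean document; each statement's English description precedes it below -/
import Mathlib

section
/- Let v_1, ..., v_q be 0/1 vectors in Z^n, each with exactly d nonzero entries (d-uniform). Let B = {(v_1,1), ..., (v_q,1)} in Z^{n+1} and A' = B ∪ {e_1, ..., e_n} (the first n standard unit vectors of Z^{n+1}). Then the cone generated by B equals the intersection of the linear span of B with the cone generated by A', i.e., R_+B = span_R(B) ∩ R_+A'. -/
/-!
The functional `x ↦ d * x_{n+1} - (x_1 + ⋯ + x_n)` vanishes on every `(vⱼ, 1)`, hence on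
`span B`, and takes the value `-1` on every `eᵢ`. A point of `span B` written as
`∑ λⱼ (vⱼ, 1) + ∑ μᵢ eᵢ` with `μ ≥ 0` therefore has `∑ μᵢ = 0`, so all `μᵢ` vanish and the
point already lies in `ℝ₊B`.
-/

open Finset

section Cone

variable {R M ι κ : Type*} [Ring R] [LinearOrder R] [IsStrictOrderedRing R]
  [AddCommGroup M] [Module R M] [Fintype ι] [Fintype κ]

theorem eq_zero_of_map_sum_smul_eq_zero (L : M →ₗ[R] R) {f : κ → M} (hf : ∀ i, L (f i) < 0)
    {mu : κ → R} (hmu : ∀ i, 0 ≤ mu i) (h : L (∑ i, mu i • f i) = 0) (i : κ) : mu i = 0 := by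
  simp only [map_sum, map_smul, smul_eq_mul] at h
  have hi := (sum_eq_zero_iff_of_nonpos fun i _ =>
    mul_nonpos_of_nonneg_of_nonpos (hmu i) (hf i).le).mp h i (mem_univ i)
  exact (mul_eq_zero.mp hi).resolve_right (hf i).ne

theorem cone_eq_span_inter_cone_of_separating (L : M →ₗ[R] R) {b : ι → M} {f : κ → M}
    (hb : ∀ j, L (b j) = 0) (hf : ∀ i, L (f i) < 0) :
    {x : M | ∃ lam : ι → R, (∀ j, 0 ≤ lam j) ∧ x = ∑ j, lam j • b j}
      = ↑(Submodule.span R (Set.range b)) ∩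
        {x : M | ∃ (lam : ι → R) (mu : κ → R), (∀ j, 0 ≤ lam j) ∧ (∀ i, 0 ≤ mu i) ∧
          x = ∑ j, lam j • b j + ∑ i, mu i • f i} := by
  ext x
  constructor
  · rintro ⟨lam, hlam, rfl⟩
    exact ⟨Submodule.sum_mem _ fun j _ => Submodule.smul_mem _ _ (Submodule.subset_span ⟨j, rfl⟩),
      lam, 0, hlam, fun _ => le_rfl, by simp⟩
  · rintro ⟨hspan, lam, mu, hlam, hmu, rfl⟩
    have hker : Submodule.span R (Set.range b) ≤ LinearMap.ker L :=
      Submodule.span_le.mpr (Set.range_subset_iff.mpr hb)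
    have hLmu : L (∑ i, mu i • f i) = 0 := by
      simpa [map_sum, hb] using hker hspan
    have hmu0 := eq_zero_of_map_sum_smul_eq_zero L hf hmu hLmu
    exact ⟨lam, hlam, by simp [hmu0]⟩

end Cone

section HeightDefect

variable {R : Type*} [CommRing R]

def heightDefect (n : ℕ) (d : R) : (Fin (n + 1) → R) →ₗ[R] R :=
  d • LinearMap.proj (Fin.last n) - ∑ i : Fin n, LinearMap.proj i.castSucc

theorem heightDefect_apply (n : ℕ) (d : R) (x : Fin (n + 1) → R) :
    heightDefect n d x = d * x (Fin.last n) - ∑ i : Fin n, x i.castSucc := by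
  simp [heightDefect, LinearMap.sum_apply]

theorem heightDefect_snoc (n : ℕ) (d : R) (w : Fin n → R) (a : R) :
    heightDefect n d (Fin.snoc w a) = d * a - ∑ i, w i := by
  simp [heightDefect_apply]

theorem heightDefect_single_castSucc (n : ℕ) (d : R) (i : Fin n) :
    heightDefect n d (Pi.single i.castSucc 1) = -1 := by
  simp [heightDefect_apply, Pi.single_apply, (Fin.castSucc_lt_last i).ne']

end HeightDefect

theorem stmt0_general (n q d : ℕ) (v : Fin q → Fin n → ℝ)
    (hd : ∀ j, ∑ i, v j i = (d : ℝ))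
    (B : Fin q → Fin (n + 1) → ℝ) (hB : ∀ j, B j = Fin.snoc (v j) 1)
    (e : Fin n → Fin (n + 1) → ℝ) (he : ∀ i, e i = Pi.single (Fin.castSucc i) 1) :
    {x : Fin (n + 1) → ℝ | ∃ lam : Fin q → ℝ, (∀ j, 0 ≤ lam j) ∧ x = ∑ j, lam j • B j}
      = ↑(Submodule.span ℝ (Set.range B)) ∩
        {x : Fin (n + 1) → ℝ | ∃ (lam : Fin q → ℝ) (mu : Fin n → ℝ),
          (∀ j, 0 ≤ lam j) ∧ (∀ i, 0 ≤ mu i) ∧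
          x = ∑ j, lam j • B j + ∑ i, mu i • e i} := by
  refine cone_eq_span_inter_cone_of_separating (heightDefect n (d : ℝ)) (fun j => ?_) (fun i => ?_)
  · rw [hB, heightDefect_snoc, hd, mul_one, sub_self]
  · rw [he, heightDefect_single_castSucc]
    exact neg_one_lt_zero

/-- For 0/1 vectors `v₁,…,v_q` in `ℤⁿ` each with exactly `d` ones,
`B = {(vᵢ,1)}` and `A' = B ∪ {e₁,…,eₙ}`, we have `ℝ₊B = span ℝ B ∩ ℝ₊A'`. -/
theorem stmt0 (n q d : ℕ) (v : Fin q → Fin n → ℝ)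
    (h01 : ∀ j i, v j i = 0 ∨ v j i = 1)
    (hd : ∀ j, ∑ i, v j i = (d : ℝ))
    (B : Fin q → Fin (n + 1) → ℝ) (hB : ∀ j, B j = Fin.snoc (v j) 1)
    (e : Fin n → Fin (n + 1) → ℝ) (he : ∀ i, e i = Pi.single (Fin.castSucc i) 1) :
    {x : Fin (n + 1) → ℝ | ∃ lam : Fin q → ℝ, (∀ j, 0 ≤ lam j) ∧ x = ∑ j, lam j • B j}
      = ↑(Submodule.span ℝ (Set.range B)) ∩
        {x : Fin (n + 1) → ℝ | ∃ (lam : Fin q → ℝ) (mu : Fin n → ℝ),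
          (∀ j, 0 ≤ lam j) ∧ (∀ i, 0 ≤ mu i) ∧
          x = ∑ j, lam j • B j + ∑ i, mu i • e i} :=
  stmt0_general n q d v hd B hB e he
end

section
/- Let A be an n × q real matrix whose columns v_1, ..., v_q are 0/1 vectors, and suppose there exist 0/1 vectors u_1, ..., u_d ∈ {0,1}^n with pairwise disjoint supports whose supports partition {1,...,n}, such that ⟨v_i, u_k⟩ = 1 for all i = 1,...,q and k = 1,...,d, and each u_k has exactly g ones. Then rank(A) ≤ g + (d-1)(g-1). -/
open Finset

/-- If the columns `vᵢ ∈ {0,1}ⁿ` of `A` satisfy `⟨vᵢ,u_k⟩ = 1` for 0/1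
vectors `u₁,…,u_d` whose supports partition `{1,…,n}`, each with `g` ones, then
`rank A ≤ g + (d-1)(g-1)`. -/
theorem stmt2 (n q d g : ℕ) (v : Fin q → Fin n → ℝ) (u : Fin d → Fin n → ℝ)
    (hv01 : ∀ i j, v i j = 0 ∨ v i j = 1)
    (hu01 : ∀ k j, u k j = 0 ∨ u k j = 1)
    (hpart : ∀ j : Fin n, ∃! k : Fin d, u k j = 1)
    (hg : ∀ k, ∑ j, u k j = (g : ℝ))
    (hinner : ∀ i k, ∑ j, v i j * u k j = 1) :
    (Matrix.of (fun (r : Fin n) (c : Fin q) => v c r) : Matrix (Fin n) (Fin q) ℝ).rank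
      ≤ g + (d - 1) * (g - 1) := by
  classical
  set A : Matrix (Fin n) (Fin q) ℝ := Matrix.of (fun r c => v c r) with hA
  rcases Nat.eq_zero_or_pos q with hq | hq
  · have h := Matrix.rank_le_width A
    omega
  rcases Nat.eq_zero_or_pos n with hn | hn
  · have h := Matrix.rank_le_height A
    omega
  have i0 : Fin q := ⟨0, hq⟩
  have j0 : Fin n := ⟨0, hn⟩
  obtain ⟨k0, hk0, -⟩ := hpart j0
  have hd : 1 ≤ d := k0.pos
  -- g ≥ 1
  have hgpos : 1 ≤ g := by
    by_contra h
    have hg0 : (g : ℝ) = 0 := by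
      have : g = 0 := by omega
      simp [this]
    have hzero : ∀ j, u k0 j = 0 := by
      intro j
      have hnn : ∀ j ∈ Finset.univ, (0:ℝ) ≤ u k0 j := by
        intro j _; rcases hu01 k0 j with h | h <;> simp [h]
      have := (Finset.sum_eq_zero_iff_of_nonneg hnn).mp (by rw [hg k0, hg0])
      exact this j (Finset.mem_univ j)
    rw [hzero j0] at hk0
    norm_num at hk0
  -- sum over k of u k j = 1
  have hsum1 : ∀ j, ∑ k, u k j = (1:ℝ) := by
    intro j
    obtain ⟨k, hk, huniq⟩ := hpart j
    rw [Finset.sum_eq_single k]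
    · exact hk
    · intro k' _ hne
      rcases hu01 k' j with h | h
      · exact h
      · exact absurd (huniq k' h) hne
    · simp
  -- n = d * g
  have hndg : n = d * g := by
    have hcomm : ∑ k : Fin d, ∑ j : Fin n, u k j = ∑ j : Fin n, ∑ k : Fin d, u k j :=
      Finset.sum_comm
    have : (d : ℝ) * g = (n : ℝ) := by
      simpa [hg, hsum1, Finset.sum_const, mul_comm] using hcomm
    exact_mod_cast this.symm
  -- orthogonality of the u's
  have horth : ∀ m k : Fin d, ∑ j, u m j * u k j = if m = k then (g:ℝ) else 0 := by
    intro m k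
    by_cases h : m = k
    · subst h
      simp only [if_pos rfl]
      rw [← hg m]
      apply Finset.sum_congr rfl
      intro j _
      rcases hu01 m j with h | h <;> simp [h]
    · rw [if_neg h]
      apply Finset.sum_eq_zero
      intro j _
      rcases hu01 m j with hm | hm
      · simp [hm]
      · rcases hu01 k j with hk | hk
        · simp [hk]
        · obtain ⟨k', -, huniq⟩ := hpart j
          exact absurd ((huniq m hm).trans (huniq k hk).symm) h
  -- the linear map L
  set U : Matrix (Fin d) (Fin n) ℝ := Matrix.of u with hU
  set L : (Fin n → ℝ) →ₗ[ℝ] (Fin d → ℝ) := U.mulVecLin with hL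
  have hLapp : ∀ (x : Fin n → ℝ) (k : Fin d), L x k = ∑ j, u k j * x j := by
    intro x k
    simp [hL, hU, Matrix.mulVecLin, Matrix.mulVec, dotProduct]
  have hgne : (g : ℝ) ≠ 0 := by positivity
  -- L is surjective
  have hsurj : Function.Surjective L := by
    intro y
    refine ⟨∑ m, (y m / g) • u m, ?_⟩
    funext k
    rw [hLapp]
    have : ∀ j, u k j * (∑ m, (y m / g) • u m) j = ∑ m, (y m / g) * (u m j * u k j) := by
      intro j
      simp only [Finset.sum_apply, Pi.smul_apply, smul_eq_mul, Finset.mul_sum]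
      apply Finset.sum_congr rfl
      intro m _; ring
    simp_rw [this]
    rw [Finset.sum_comm]
    have : ∀ m, ∑ j, (y m / g) * (u m j * u k j) = if m = k then y m else 0 := by
      intro m
      rw [← Finset.mul_sum, horth m k]
      by_cases h : m = k <;> simp [h, div_mul_cancel₀, hgne]
    simp_rw [this]
    simp
  -- finrank of the kernel
  have hker : Module.finrank ℝ (LinearMap.ker L) = n - d := by
    have hrn := LinearMap.finrank_range_add_finrank_ker L
    rw [LinearMap.range_eq_top.mpr hsurj] at hrn
    simp only [finrank_top, Module.finrank_pi, Fintype.card_fin] at hrn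
    omega
  -- columns map to ones
  have hLcol : ∀ i : Fin q, L (fun r => v i r) = fun _ => 1 := by
    intro i
    funext k
    rw [hLapp]
    rw [← hinner i k]
    apply Finset.sum_congr rfl
    intro j _; ring
  set w : Fin n → ℝ := fun r => v i0 r with hw
  set S : Submodule ℝ (Fin n → ℝ) := (ℝ ∙ w) ⊔ LinearMap.ker L with hS
  have hcols : ∀ i : Fin q, (fun r => v i r) ∈ S := by
    intro i
    have h1 : w ∈ S := le_sup_left (a := ℝ ∙ w) (Submodule.mem_span_singleton_self w)
    have h2 : (fun r => v i r) - w ∈ S := by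
      apply le_sup_right (a := ℝ ∙ w)
      rw [LinearMap.mem_ker, map_sub, hLcol i, hLcol i0]
      simp
    have := S.add_mem h2 h1
    simpa using this
  have hspan : Submodule.span ℝ (Set.range A.transpose) ≤ S := by
    rw [Submodule.span_le]
    rintro x ⟨i, rfl⟩
    exact hcols i
  have hrank : A.rank ≤ Module.finrank ℝ S := by
    rw [Matrix.rank_eq_finrank_span_cols]
    exact Submodule.finrank_mono hspan
  have hSle : Module.finrank ℝ S ≤ 1 + (n - d) := by
    refine le_trans (Submodule.finrank_add_le_finrank_add_finrank _ _) ?_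
    rw [hker]
    gcongr
    exact le_trans (finrank_span_le_card _) (by simp)
  have : A.rank ≤ 1 + (n - d) := hrank.trans hSle
  -- arithmetic
  have : 1 + (n - d) = g + (d - 1) * (g - 1) := by
    obtain ⟨d', rfl⟩ := Nat.exists_eq_add_of_le hd
    obtain ⟨g', rfl⟩ := Nat.exists_eq_add_of_le hgpos
    simp only [Nat.add_sub_cancel_left] at *
    rw [hndg]; ring_nf; omega
  omega
end

section
/- A graph G is Meyniel (every odd cycle of length at least five has at least two chords) if and only if the cone C(G) over G is Meyniel. -/
/-!
`G` is an induced subgraph of its cone, and being Meyniel passes to induced subgraphs: the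
chords of the image of a cycle are images of chords. Conversely, a cycle of the cone avoiding
the apex is the image of a cycle of `G`, whose chords map to chords, while a cycle of length
`n ≥ 5` through the apex uses only two edges at the apex, so the apex is joined by chords to the
other `n - 3 ≥ 2` vertices of the cycle.
-/

/-- A graph is Meyniel if every odd cycle of length at least `5` has at least two
chords (edges of the graph joining two vertices of the cycle that are not edges of
the cycle). -/
def Meyniel {V : Type} (G : SimpleGraph V) : Prop :=
  ∀ (v : V) (w : G.Walk v v), w.IsCycle → Odd w.length → 5 ≤ w.length →
    ∃ e₁ e₂ : Sym2 V, e₁ ≠ e₂ ∧ e₁ ∈ G.edgeSet ∧ e₂ ∈ G.edgeSet ∧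
      e₁ ∉ w.edges ∧ e₂ ∉ w.edges ∧
      (∀ x ∈ e₁, x ∈ w.support) ∧ (∀ x ∈ e₂, x ∈ w.support)

namespace SimpleGraph

variable {V W : Type*} {G : SimpleGraph V} {H : SimpleGraph W}

namespace Walk

lemma isChord_iff {u v : V} {w : G.Walk u v} {e : Sym2 V} :
    w.IsChord e ↔ e ∈ G.edgeSet ∧ e ∉ w.edges ∧ ∀ x ∈ e, x ∈ w.support := by
  induction e using Sym2.ind with
  | _ x y => simp [isChord_sym2Mk]

lemma IsChord.map (f : G ↪g H) {u v : V} {w : G.Walk u v} {e : Sym2 V} (h : w.IsChord e) :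
    (w.map f.toHom).IsChord (e.map f) := by
  induction e using Sym2.ind with
  | _ x y =>
    obtain ⟨hxy, hnot, hx, hy⟩ := isChord_sym2Mk.mp h
    refine isChord_sym2Mk.mpr ⟨f.map_adj_iff.mpr hxy, ?_, ?_, ?_⟩
    · rw [edges_map]
      exact fun hc => hnot ((List.mem_map_of_injective (Sym2.map.injective f.injective)).mp hc)
    all_goals rw [support_map]; exact List.mem_map_of_mem ‹_›

lemma IsChord.exists_eq_map (f : G ↪g H) {u v : V} {w : G.Walk u v} {e : Sym2 W}
    (h : (w.map f.toHom).IsChord e) : ∃ e' : Sym2 V, e'.map f = e ∧ w.IsChord e' := by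
  induction e using Sym2.ind with
  | _ x y =>
    obtain ⟨hxy, hnot, hx, hy⟩ := isChord_sym2Mk.mp h
    simp only [support_map, List.mem_map] at hx hy
    obtain ⟨a, ha, rfl⟩ := hx
    obtain ⟨b, hb, rfl⟩ := hy
    refine ⟨s(a, b), rfl, isChord_sym2Mk.mpr ⟨f.map_adj_iff.mp hxy, fun hc => hnot ?_, ha, hb⟩⟩
    rw [edges_map]
    exact List.mem_map_of_mem (f := Sym2.map f) hc

lemma exists_map_eq_copy (f : G ↪g H) {x y : W} (w : H.Walk x y) {a b : V} (ha : f a = x)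
    (hb : f b = y) (hw : ∀ z ∈ w.support, z ∈ Set.range f) :
    ∃ q : G.Walk a b, (q.map f.toHom).copy ha hb = w := by
  induction w generalizing a with
  | nil =>
    subst ha
    obtain rfl := f.injective hb
    exact ⟨nil, rfl⟩
  | @cons _ z _ hadj w ih =>
    subst ha hb
    obtain ⟨c, rfl⟩ := hw z (List.mem_cons_of_mem _ w.start_mem_support)
    obtain ⟨q, hq⟩ := ih rfl rfl fun z hz => hw z (List.mem_cons_of_mem _ hz)
    exact ⟨cons (f.map_adj_iff.mp hadj) q, by simpa using hq⟩

lemma exists_map_eq (f : G ↪g H) {a b : V} (w : H.Walk (f a) (f b))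
    (hw : ∀ z ∈ w.support, z ∈ Set.range f) : ∃ q : G.Walk a b, q.map f.toHom = w :=
  exists_map_eq_copy f w rfl rfl hw

lemma IsCycle.card_support_toFinset [DecidableEq V] {u : V} {w : G.Walk u u} (hw : w.IsCycle) :
    w.support.toFinset.card = w.length := by
  rw [← cons_tail_support, List.toFinset_cons,
    Finset.insert_eq_of_mem (List.mem_toFinset.mpr (end_mem_tail_support hw.not_nil)),
    List.toFinset_card_of_nodup hw.support_nodup, List.length_tail, length_support,
    Nat.add_sub_cancel]

lemma IsCycle.exists_pair_notMem_edges {u v : V} {w : G.Walk u u} (hw : w.IsCycle)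
    (hlen : 5 ≤ w.length) (hv : v ∈ w.support) :
    ∃ x y, x ≠ y ∧ x ∈ w.support ∧ y ∈ w.support ∧ x ≠ v ∧ y ≠ v ∧
      s(v, x) ∉ w.edges ∧ s(v, y) ∉ w.edges := by
  classical
  set N := insert v (w.toSubgraph.neighborSet v)
  have hN : N.ncard ≤ 3 := (Set.ncard_insert_le _ _).trans (by
    rw [hw.ncard_neighborSet_toSubgraph_eq_two hv])
  have hNfin : N.Finite := (Set.finite_of_ncard_ne_zero
    (by rw [hw.ncard_neighborSet_toSubgraph_eq_two hv]; simp)).insert v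
  have hcard : 1 < ((w.support.toFinset : Set V) \ N).ncard := by
    have := Set.ncard_le_ncard_sdiff_add_ncard (w.support.toFinset : Set V) N hNfin
    rw [Set.ncard_coe_finset, hw.card_support_toFinset] at this
    omega
  obtain ⟨x, ⟨hxw, hxN⟩, y, ⟨hyw, hyN⟩, hxy⟩ := Set.one_lt_ncard_iff_nontrivial.mp hcard
  simp only [N, Set.mem_insert_iff, Subgraph.mem_neighborSet, not_or, ← Subgraph.mem_edgeSet,
    mem_edges_toSubgraph] at hxN hyN
  simp only [Finset.mem_coe, List.mem_toFinset] at hxw hyw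
  exact ⟨x, y, hxy, hxw, hyw, hxN.1, hyN.1, hxN.2, hyN.2⟩

lemma IsCycle.exists_two_chords_of_forall_adj {u v : V} {w : G.Walk u u} (hw : w.IsCycle)
    (hlen : 5 ≤ w.length) (hv : v ∈ w.support) (hadj : ∀ x, x ≠ v → G.Adj v x) :
    ∃ e₁ e₂, e₁ ≠ e₂ ∧ w.IsChord e₁ ∧ w.IsChord e₂ := by
  obtain ⟨x, y, hxy, hx, hy, hxv, hyv, hvx, hvy⟩ := hw.exists_pair_notMem_edges hlen hv
  exact ⟨s(v, x), s(v, y), fun h => hxy (Sym2.congr_right.mp h),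
    isChord_sym2Mk.mpr ⟨hadj x hxv, hvx, hv, hx⟩, isChord_sym2Mk.mpr ⟨hadj y hyv, hvy, hv, hy⟩⟩

end Walk

end SimpleGraph

section

variable {V W : Type} {G : SimpleGraph V} {H : SimpleGraph W}

lemma meyniel_iff_forall_exists_isChord : Meyniel G ↔ ∀ (v : V) (w : G.Walk v v), w.IsCycle →
    Odd w.length → 5 ≤ w.length → ∃ e₁ e₂, e₁ ≠ e₂ ∧ w.IsChord e₁ ∧ w.IsChord e₂ := by
  simp only [Meyniel, SimpleGraph.Walk.isChord_iff, and_assoc, and_left_comm]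

lemma Meyniel.comap (f : G ↪g H) (hH : Meyniel H) : Meyniel G := by
  rw [meyniel_iff_forall_exists_isChord] at hH ⊢
  intro v w hw hodd hlen
  obtain ⟨e₁, e₂, hne, h₁, h₂⟩ := hH (f v) (w.map f.toHom) (hw.map f.injective)
    (by rwa [SimpleGraph.Walk.length_map]) (by rwa [SimpleGraph.Walk.length_map])
  obtain ⟨e₁', rfl, h₁'⟩ := h₁.exists_eq_map f
  obtain ⟨e₂', rfl, h₂'⟩ := h₂.exists_eq_map f
  exact ⟨e₁', e₂', fun h => hne (congrArg _ h), h₁', h₂'⟩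

end

/-- `G` is Meyniel iff the cone `C(G)` over `G` is Meyniel. -/
theorem stmt7 {V : Type} (G : SimpleGraph V) (H : SimpleGraph (Option V))
    (hH₁ : ∀ a b : V, H.Adj (some a) (some b) ↔ G.Adj a b)
    (hH₂ : ∀ a : V, H.Adj none (some a)) :
    Meyniel G ↔ Meyniel H := by
  let f : G ↪g H := ⟨.some, hH₁ _ _⟩
  refine ⟨fun hG => ?_, Meyniel.comap f⟩
  rw [meyniel_iff_forall_exists_isChord] at hG ⊢
  intro v w hw hodd hlen
  by_cases hapex : none ∈ w.support
  · refine hw.exists_two_chords_of_forall_adj hlen hapex ?_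
    rintro (_ | a) ha
    exacts [absurd rfl ha, hH₂ a]
  have hrange : ∀ z ∈ w.support, z ∈ Set.range f := fun z hz =>
    Option.ne_none_iff_exists.mp (ne_of_mem_of_not_mem hz hapex)
  obtain ⟨a, rfl⟩ := hrange v w.start_mem_support
  obtain ⟨q, rfl⟩ := SimpleGraph.Walk.exists_map_eq f w hrange
  rw [SimpleGraph.Walk.length_map] at hodd hlen
  obtain ⟨e₁, e₂, hne, h₁, h₂⟩ := hG a q hw.of_map hodd hlen
  exact ⟨_, _, (Sym2.map.injective f.injective).ne hne, h₁.map f, h₂.map f⟩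
end

section
/- Let A be an integral n × q matrix with columns v_1, ..., v_q and w = (w_1,...,w_q) an integral vector. Suppose the polyhedron P = {x ∈ R^n : x^T A ≤ w} is integral (every minimal face of P contains an integral point) and the set H(A,w) = {(v_1,w_1), ..., (v_q,w_q)} ⊂ Z^{n+1} is a Hilbert basis. Then for every minimal face F of P, if v_1,...,v_r are the columns active in F (i.e., ⟨x, v_i⟩ = w_i for all x ∈ F exactly when i ≤ r), the set {v_1, ..., v_r} is a Hilbert basis. -/
open Finset

/-- Membership in the real cone generated by a finite family of integral vectors. -/
def coneMem {n : ℕ} {ι : Type} [Fintype ι] (v : ι → Fin n → ℤ) (x : Fin n → ℤ) : Prop :=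
  ∃ c : ι → ℝ, (∀ i, 0 ≤ c i) ∧
    (fun j => (x j : ℝ)) = ∑ i, c i • (fun j => (v i j : ℝ))

/-- A finite family of integral vectors is a Hilbert basis if every integral vector
in the real cone it generates is a non-negative integer combination of the family. -/
def IsHilbertBasis {n : ℕ} {ι : Type} [Fintype ι] (v : ι → Fin n → ℤ) : Prop :=
  ∀ x : Fin n → ℤ, coneMem v x → ∃ c : ι → ℕ, x = ∑ i, c i • v i

lemma sum_castLE_aux {M : Type*} [AddCommMonoid M] {q r : ℕ} (hr : r ≤ q) (f : Fin q → M)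
    (hf : ∀ i : Fin q, ¬ (i : ℕ) < r → f i = 0) :
    ∑ i, f i = ∑ i : Fin r, f (Fin.castLE hr i) := by
  classical
  have h1 : ∑ i ∈ (Finset.univ.map ⟨Fin.castLE hr, Fin.castLE_injective hr⟩), f i
      = ∑ i : Fin r, f (Fin.castLE hr i) := Finset.sum_map _ _ _
  rw [← h1]
  refine (Finset.sum_subset (Finset.subset_univ _) ?_).symm
  intro i _ hi
  refine hf i fun hlt => hi ?_
  simp only [Finset.mem_map, Finset.mem_univ, Function.Embedding.coeFn_mk, true_and]
  exact ⟨⟨i, hlt⟩, rfl⟩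

/-- If `P = {x : xᵀA ≤ w}` is integral (every minimal face contains an
integral point) and `{(vᵢ,wᵢ)}` is a Hilbert basis, then for every minimal face `F`
of `P` the columns active in `F` (exactly `v₁,…,v_r`) form a Hilbert basis. -/
theorem stmt10 (n q r : ℕ) (hr : r ≤ q)
    (v : Fin q → Fin n → ℤ) (w : Fin q → ℤ)
    (P : Set (Fin n → ℝ))
    (hP : P = {x : Fin n → ℝ | ∀ i, ∑ j, x j * (v i j : ℝ) ≤ (w i : ℝ)})
    (Face : Set (Fin n → ℝ) → Prop)
    (hFace : ∀ F, Face F ↔ (F.Nonempty ∧ ∃ I : Set (Fin q),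
      F = {x ∈ P | ∀ i ∈ I, ∑ j, x j * (v i j : ℝ) = (w i : ℝ)}))
    (hPint : ∀ F, Face F → (∀ F', Face F' → F' ⊆ F → F' = F) →
      ∃ x ∈ F, ∀ j, ∃ z : ℤ, x j = (z : ℝ))
    (hHilb : IsHilbertBasis (fun i => Fin.snoc (v i) (w i)))
    (F : Set (Fin n → ℝ)) (hF : Face F)
    (hFmin : ∀ F', Face F' → F' ⊆ F → F' = F)
    (hactive : ∀ i : Fin q,
      ((i : ℕ) < r ↔ ∀ x ∈ F, ∑ j, x j * (v i j : ℝ) = (w i : ℝ))) :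
    IsHilbertBasis (fun i : Fin r => v (Fin.castLE hr i)) := by
  classical
  intro x hx
  obtain ⟨c, hc0, hcx⟩ := hx
  obtain ⟨x₀, hx₀F, hx₀int⟩ := hPint F hF hFmin
  choose z hz using hx₀int
  obtain ⟨hne, I, hFI⟩ := (hFace F).mp hF
  have hx₀P : x₀ ∈ P := by
    rw [hFI] at hx₀F; exact hx₀F.1
  have hact : ∀ i : Fin q, (i : ℕ) < r → ∑ j, x₀ j * (v i j : ℝ) = (w i : ℝ) :=
    fun i hi => (hactive i).mp hi x₀ hx₀F
  set d : ℤ := ∑ j, x j * z j with hd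
  have hcoord : ∀ j, (x j : ℝ) = ∑ i : Fin r, c i * (v (Fin.castLE hr i) j : ℝ) := by
    intro j
    have := congrFun hcx j
    simpa [Finset.sum_apply] using this
  have hdw : (d : ℝ) = ∑ i : Fin r, c i * (w (Fin.castLE hr i) : ℝ) := by
    have h1 : (d : ℝ) = ∑ j, (x j : ℝ) * (z j : ℝ) := by rw [hd]; push_cast; rfl
    calc (d : ℝ) = ∑ j, (x j : ℝ) * (z j : ℝ) := h1
      _ = ∑ j, (∑ i : Fin r, c i * (v (Fin.castLE hr i) j : ℝ)) * (z j : ℝ) := by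
          exact Finset.sum_congr rfl fun j _ => by rw [← hcoord j]
      _ = ∑ j, ∑ i : Fin r, c i * (v (Fin.castLE hr i) j : ℝ) * (z j : ℝ) := by
          exact Finset.sum_congr rfl fun j _ => Finset.sum_mul _ _ _
      _ = ∑ i : Fin r, ∑ j, c i * (v (Fin.castLE hr i) j : ℝ) * (z j : ℝ) :=
          Finset.sum_comm
      _ = ∑ i : Fin r, c i * ∑ j, x₀ j * (v (Fin.castLE hr i) j : ℝ) := by
          refine Finset.sum_congr rfl fun i _ => ?_
          rw [Finset.mul_sum]
          refine Finset.sum_congr rfl fun j _ => ?_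
          rw [hz j]; ring
      _ = ∑ i : Fin r, c i * (w (Fin.castLE hr i) : ℝ) := by
          refine Finset.sum_congr rfl fun i _ => ?_
          rw [hact _ (by simp [Fin.coe_castLE, i.isLt])]
  -- cone membership of the lifted vector
  have hcone : coneMem (fun i => Fin.snoc (v i) (w i)) (Fin.snoc x d) := by
    refine ⟨fun i => if h : (i : ℕ) < r then c ⟨i, h⟩ else 0, fun i => ?_, ?_⟩
    · by_cases h : (i : ℕ) < r <;> simp [h, hc0]
    · funext j
      rw [Finset.sum_apply]
      have hv0 : ∀ i : Fin q, ¬ (i : ℕ) < r →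
          ((if h : (i : ℕ) < r then c ⟨i, h⟩ else 0) •
            (fun j => ((Fin.snoc (v i) (w i) : Fin (n+1) → ℤ) j : ℝ))) j = 0 := by
        intro i hi; simp [hi]
      rw [sum_castLE_aux hr _ hv0]
      have hsimp : ∀ i : Fin r,
          ((if h : ((Fin.castLE hr i : Fin q) : ℕ) < r then c ⟨(Fin.castLE hr i : Fin q), h⟩ else 0) •
            (fun j => ((Fin.snoc (v (Fin.castLE hr i)) (w (Fin.castLE hr i)) : Fin (n+1) → ℤ) j : ℝ))) j
          = c i * ((Fin.snoc (v (Fin.castLE hr i)) (w (Fin.castLE hr i)) : Fin (n+1) → ℤ) j : ℝ) := by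
        intro i
        have hlt : ((Fin.castLE hr i : Fin q) : ℕ) < r := by simp [i.isLt]
        simp only [hlt, dif_pos, Pi.smul_apply, smul_eq_mul]
        congr 1
      rw [Finset.sum_congr rfl fun i _ => hsimp i]
      refine Fin.lastCases ?_ ?_ j
      · simpa [Fin.snoc_last] using hdw
      · intro j0
        simpa [Fin.snoc_castSucc] using hcoord j0
  obtain ⟨m, hm⟩ := hHilb (Fin.snoc x d) hcone
  have hmx : ∀ j0, x j0 = ∑ i, (m i : ℤ) * v i j0 := by
    intro j0
    have := congrFun hm (Fin.castSucc j0)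
    simpa [Finset.sum_apply, Fin.snoc_castSucc] using this
  have hmd : d = ∑ i, (m i : ℤ) * w i := by
    have := congrFun hm (Fin.last n)
    simpa [Finset.sum_apply, Fin.snoc_last] using this
  -- slack argument
  have hzP : ∀ i, ∑ j, z j * v i j ≤ w i := by
    intro i
    have h1 : ∑ j, x₀ j * (v i j : ℝ) ≤ (w i : ℝ) := by
      rw [hP] at hx₀P; exact hx₀P i
    have h2 : ((∑ j, z j * v i j : ℤ) : ℝ) ≤ (w i : ℝ) := by
      push_cast
      calc ∑ j, (z j : ℝ) * (v i j : ℝ) = ∑ j, x₀ j * (v i j : ℝ) := by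
            exact Finset.sum_congr rfl fun j _ => by rw [hz j]
        _ ≤ (w i : ℝ) := h1
    exact_mod_cast h2
  have hsum0 : ∑ i, (m i : ℤ) * (w i - ∑ j, z j * v i j) = 0 := by
    have hdz : d = ∑ i, (m i : ℤ) * ∑ j, z j * v i j := by
      calc d = ∑ j, x j * z j := hd
        _ = ∑ j, (∑ i, (m i : ℤ) * v i j) * z j :=
            Finset.sum_congr rfl fun j _ => by rw [← hmx j]
        _ = ∑ j, ∑ i, (m i : ℤ) * v i j * z j :=
            Finset.sum_congr rfl fun j _ => Finset.sum_mul _ _ _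
        _ = ∑ i, ∑ j, (m i : ℤ) * v i j * z j := Finset.sum_comm
        _ = ∑ i, (m i : ℤ) * ∑ j, z j * v i j := by
            refine Finset.sum_congr rfl fun i _ => ?_
            rw [Finset.mul_sum]
            exact Finset.sum_congr rfl fun j _ => by ring
    have : ∑ i, (m i : ℤ) * (w i - ∑ j, z j * v i j)
        = (∑ i, (m i : ℤ) * w i) - ∑ i, (m i : ℤ) * ∑ j, z j * v i j := by
      rw [← Finset.sum_sub_distrib]
      exact Finset.sum_congr rfl fun i _ => by ring
    rw [this, ← hmd, ← hdz, sub_self]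
  have hkey : ∀ i : Fin q, m i ≠ 0 → ∑ j, z j * v i j = w i := by
    intro i hmi
    have hterm : (m i : ℤ) * (w i - ∑ j, z j * v i j) = 0 := by
      have hnn : ∀ i ∈ Finset.univ, (0 : ℤ) ≤ (m i : ℤ) * (w i - ∑ j, z j * v i j) :=
        fun i _ => mul_nonneg (by positivity) (sub_nonneg.mpr (hzP i))
      exact (Finset.sum_eq_zero_iff_of_nonneg hnn).mp hsum0 i (Finset.mem_univ i)
    have : (w i - ∑ j, z j * v i j) = 0 := by
      rcases mul_eq_zero.mp hterm with h | h
      · exact absurd (by exact_mod_cast h) hmi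
      · exact h
    linarith [this]
  have hlt : ∀ i : Fin q, m i ≠ 0 → (i : ℕ) < r := by
    intro i hmi
    have heq : ∑ j, x₀ j * (v i j : ℝ) = (w i : ℝ) := by
      have h1 := hkey i hmi
      have h2 : ((∑ j, z j * v i j : ℤ) : ℝ) = (w i : ℝ) := by exact_mod_cast h1
      rw [← h2]
      push_cast
      exact Finset.sum_congr rfl fun j _ => by rw [hz j]
    set F' := {x ∈ P | ∀ i' ∈ (I ∪ {i} : Set (Fin q)),
      ∑ j, x j * (v i' j : ℝ) = (w i' : ℝ)} with hF'
    have hx₀F' : x₀ ∈ F' := by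
      refine ⟨hx₀P, fun i' hi' => ?_⟩
      rcases hi' with h | h
      · rw [hFI] at hx₀F; exact hx₀F.2 i' h
      · rw [Set.mem_singleton_iff] at h; subst h; exact heq
    have hFaceF' : Face F' := (hFace F').mpr ⟨⟨x₀, hx₀F'⟩, I ∪ {i}, rfl⟩
    have hsub : F' ⊆ F := by
      rw [hFI]
      intro y hy
      exact ⟨hy.1, fun i' hi' => hy.2 i' (Set.mem_union_left _ hi')⟩
    have hFF : F' = F := hFmin F' hFaceF' hsub
    refine (hactive i).mpr fun y hy => ?_
    rw [← hFF] at hy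
    exact hy.2 i (Set.mem_union_right _ rfl)
  refine ⟨fun i0 => m (Fin.castLE hr i0), ?_⟩
  funext j0
  rw [Finset.sum_apply]
  have hv : ∀ i : Fin q, ¬ (i : ℕ) < r → (m i : ℤ) * v i j0 = 0 := by
    intro i hi
    have : m i = 0 := by by_contra h; exact hi (hlt i h)
    simp [this]
  calc x j0 = ∑ i, (m i : ℤ) * v i j0 := hmx j0
    _ = ∑ i0 : Fin r, (m (Fin.castLE hr i0) : ℤ) * v (Fin.castLE hr i0) j0 :=
        sum_castLE_aux hr _ hv
    _ = ∑ i0 : Fin r, (m (Fin.castLE hr i0) • v (Fin.castLE hr i0)) j0 := by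
        refine Finset.sum_congr rfl fun i0 _ => ?_
        simp [nsmul_eq_mul]
end

section
/- Let G be a bipartite graph without isolated vertices that is unmixed (all minimal vertex covers of G have the same cardinality), on n vertices. Then n is even and every minimal vertex cover of G has exactly n/2 vertices. -/
open Finset

/-- An unmixed bipartite graph without isolated vertices on `n`
vertices has `n` even and every minimal vertex cover of size exactly `n/2`. -/
theorem stmt16 {V : Type} [Fintype V] [DecidableEq V] (G : SimpleGraph V)
    (hbip : G.Colorable 2)
    (hniso : ∀ v : V, ∃ u, G.Adj v u)
    (isVC : Finset V → Prop)
    (hVC : ∀ C, isVC C ↔ ∀ u v : V, G.Adj u v → u ∈ C ∨ v ∈ C)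
    (isMinVC : Finset V → Prop)
    (hMin : ∀ C, isMinVC C ↔ (isVC C ∧ ∀ C' ⊆ C, isVC C' → C' = C))
    (hunmixed : ∀ C C', isMinVC C → isMinVC C' → C.card = C'.card) :
    Even (Fintype.card V) ∧ ∀ C, isMinVC C → C.card = Fintype.card V / 2 := by
  obtain ⟨c⟩ := hbip
  have fin2a : ∀ a b : Fin 2, a ≠ b → a = 0 ∨ b = 0 := by decide
  have fin2b : ∀ a b : Fin 2, a ≠ b → a ≠ 0 → b = 0 := by decide
  set A : Finset V := Finset.univ.filter (fun v => c v = 0) with hA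
  set B : Finset V := Finset.univ.filter (fun v => c v ≠ 0) with hB
  have hmemA : ∀ v, v ∈ A ↔ c v = 0 := by intro v; simp [hA]
  have hmemB : ∀ v, v ∈ B ↔ c v ≠ 0 := by intro v; simp [hB]
  have hminA : isMinVC A := by
    rw [hMin]
    refine ⟨(hVC A).2 ?_, ?_⟩
    · intro u v huv
      rw [hmemA, hmemA]
      exact fin2a _ _ (c.valid huv)
    · intro C' hsub hC'
      apply Finset.Subset.antisymm hsub
      intro v hv
      obtain ⟨u, hu⟩ := hniso v
      have huA : u ∉ A := by
        rw [hmemA]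
        intro h0
        exact c.valid hu (((hmemA v).1 hv).trans h0.symm)
      rcases (hVC C').1 hC' v u hu with h | h
      · exact h
      · exact absurd (hsub h) huA
  have hminB : isMinVC B := by
    rw [hMin]
    refine ⟨(hVC B).2 ?_, ?_⟩
    · intro u v huv
      rw [hmemB, hmemB]
      by_contra h
      push_neg at h
      obtain ⟨h1, h2⟩ := h
      exact absurd (h1.trans h2.symm) (c.valid huv)
    · intro C' hsub hC'
      apply Finset.Subset.antisymm hsub
      intro v hv
      obtain ⟨u, hu⟩ := hniso v
      have huB : u ∉ B := by
        rw [hmemB]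
        push_neg
        exact fin2b _ _ (c.valid hu) ((hmemB v).1 hv)
      rcases (hVC C').1 hC' v u hu with h | h
      · exact h
      · exact absurd (hsub h) huB
  have hcardAB : A.card = B.card := hunmixed A B hminA hminB
  have hsum : A.card + B.card = Fintype.card V := by
    rw [hA, hB, ← Finset.card_univ]
    exact Finset.card_filter_add_card_filter_not _
  have hn : Fintype.card V = 2 * A.card := by omega
  refine ⟨⟨A.card, by omega⟩, ?_⟩
  intro C hC
  have := hunmixed C A hC hminA
  omega
end
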